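/- arXiv:2102.11940 — 6 statements merged into one kernel-verified Lean document; each statement's English description precedes it below -/
import Mathlib

section
/- Every diagonalizable 3×3 complex matrix B can be decomposed as B = b₁ + b₂ + b₃, where the matrices b₁, b₂, b₃ pairwise commute and each satisfies b_i² = c_i·𝟙 for some complex scalar c_i (explicitly, if B = P·diag(α₁,α₂,α₃)·P⁻¹, one may take b_i = ((α_i − tr B)/2)·P·D_i·P⁻¹, which gives c_i = ((α_i − tr B)/2)²). -/
open Matrix

/-- Every diagonalizable 3×3 complex matrix `B` can be decomposed as
`B = b₁ + b₂ + b₃` where the `bᵢ` pairwise commute and each squares to a complex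
scalar multiple of the identity. -/
theorem invariant_decomposition_diagonalizable_3x3
    (B P : Matrix (Fin 3) (Fin 3) ℂ) (hP : IsUnit P) (α : Fin 3 → ℂ)
    (hB : B = P * Matrix.diagonal α * P⁻¹) :
    ∃ b : Fin 3 → Matrix (Fin 3) (Fin 3) ℂ,
      B = b 0 + b 1 + b 2 ∧
      (∀ i j, b i * b j = b j * b i) ∧
      (∀ i, ∃ c : ℂ, (b i) ^ 2 = c • (1 : Matrix (Fin 3) (Fin 3) ℂ)) := by
  have hPinv : P * P⁻¹ = 1 := Matrix.mul_nonsing_inv P (isUnit_iff_isUnit_det P |>.mp hP)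
  have hinvP : P⁻¹ * P = 1 := Matrix.nonsing_inv_mul P (isUnit_iff_isUnit_det P |>.mp hP)
  set t : ℂ := α 0 + α 1 + α 2 with ht
  set d : Fin 3 → Fin 3 → ℂ := fun i j => ((α i - t) / 2) * (if i = j then 1 else -1) with hd
  refine ⟨fun i => P * Matrix.diagonal (d i) * P⁻¹, ?_, ?_, ?_⟩
  · have hsum : (fun j => d 0 j + d 1 j + d 2 j) = α := by
      funext j
      fin_cases j <;> simp [hd, ht] <;> ring
    rw [hB, ← hsum]
    have : Matrix.diagonal (fun j => d 0 j + d 1 j + d 2 j)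
        = Matrix.diagonal (d 0) + Matrix.diagonal (d 1) + Matrix.diagonal (d 2) := by
      simp [Matrix.diagonal_add]
    rw [this]
    noncomm_ring
  · intro i j
    have key : ∀ u v : Fin 3 → ℂ,
        (P * Matrix.diagonal u * P⁻¹) * (P * Matrix.diagonal v * P⁻¹)
          = P * Matrix.diagonal (fun k => u k * v k) * P⁻¹ := by
      intro u v
      calc P * Matrix.diagonal u * P⁻¹ * (P * Matrix.diagonal v * P⁻¹)
          = P * Matrix.diagonal u * (P⁻¹ * P) * Matrix.diagonal v * P⁻¹ := by
            noncomm_ring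
        _ = P * (Matrix.diagonal u * Matrix.diagonal v) * P⁻¹ := by
            rw [hinvP]; noncomm_ring
        _ = P * Matrix.diagonal (fun k => u k * v k) * P⁻¹ := by
            rw [Matrix.diagonal_mul_diagonal]
    rw [key, key]
    have : (fun k => d i k * d j k) = fun k => d j k * d i k := funext fun k => mul_comm _ _
    rw [this]
  · intro i
    refine ⟨((α i - t) / 2) ^ 2, ?_⟩
    have hdsq : (Matrix.diagonal (d i)) ^ 2 = ((α i - t) / 2) ^ 2 • (1 : Matrix (Fin 3) (Fin 3) ℂ) := by
      rw [sq, Matrix.diagonal_mul_diagonal]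
      have : (fun j => d i j * d i j) = fun _ => ((α i - t) / 2) ^ 2 := by
        funext j
        by_cases h : i = j <;> simp [hd, h] <;> ring
      rw [this]
      ext a b
      by_cases h : a = b <;> simp [Matrix.diagonal, h]
    calc (P * Matrix.diagonal (d i) * P⁻¹) ^ 2
        = P * Matrix.diagonal (d i) * (P⁻¹ * P) * Matrix.diagonal (d i) * P⁻¹ := by
          rw [sq]; noncomm_ring
      _ = P * ((Matrix.diagonal (d i)) ^ 2) * P⁻¹ := by rw [hinvP, sq]; noncomm_ring
      _ = P * (((α i - t) / 2) ^ 2 • 1) * P⁻¹ := by rw [hdsq]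
      _ = ((α i - t) / 2) ^ 2 • (P * P⁻¹) := by
          rw [Matrix.mul_smul, mul_one, Matrix.smul_mul]
      _ = _ := by rw [hPinv]
end

section
/- Every traceless skew-Hermitian 3×3 complex matrix B (an element of the Lie algebra su(3)) can be decomposed as B = b₁ + b₂ + b₃, where the matrices b₁, b₂, b₃ are skew-Hermitian, pairwise commute, and each satisfies b_i² = λ_i·𝟙 for some real scalar λ_i with λ_i ≤ 0. -/
open Matrix Complex

/-!
Multiplying by `-i` turns a skew-Hermitian `B` into a Hermitian matrix, so the spectral theorem
writes `B = U (i • diag t) U⋆` with `U` unitary and `t` real. The sign patterns `(1, 1, -1)`,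
`(1, -1, 1)`, `(-1, 1, 1)` form a basis of `ℝ³`, so `t = ∑ cₖ sₖ`, and the diagonal matrices
`i cₖ • diag sₖ` commute, are skew-Hermitian and square to `-cₖ² • 𝟙`. Conjugation by `U` is a
star-algebra automorphism, so it carries this decomposition of `i • diag t` to one of `B`.
-/

def IsInvariantDecomposition {A : Type*} [Ring A] [StarRing A] [Algebra ℂ A]
    (B : A) (b : Fin 3 → A) : Prop :=
  B = b 0 + b 1 + b 2 ∧ (∀ i, b i ∈ skewAdjoint A) ∧ (∀ i j, Commute (b i) (b j)) ∧
    ∀ i, ∃ lam : ℝ, lam ≤ 0 ∧ b i ^ 2 = (lam : ℂ) • 1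

theorem IsInvariantDecomposition.map {A A' F : Type*} [Ring A] [StarRing A] [Algebra ℂ A]
    [Ring A'] [StarRing A'] [Algebra ℂ A'] [FunLike F A A'] [AlgHomClass F ℂ A A']
    [StarHomClass F A A'] {B : A} {b : Fin 3 → A} (h : IsInvariantDecomposition B b) (φ : F) :
    IsInvariantDecomposition (φ B) (φ ∘ b) := by
  obtain ⟨hsum, hskew, hcomm, hsq⟩ := h
  refine ⟨by simp [hsum], fun i => ?_, fun i j => (hcomm i j).map φ, fun i => ?_⟩
  · simpa [skewAdjoint.mem_iff, ← map_star] using congrArg φ (hskew i)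
  · obtain ⟨lam, hlam, hb⟩ := hsq i
    exact ⟨lam, hlam, by rw [Function.comp_apply, ← map_pow, hb, map_smul, map_one]⟩

namespace Matrix

variable {n : Type*} [DecidableEq n]

theorem I_smul_diagonal_ofReal_mem_skewAdjoint (v : n → ℝ) :
    I • diagonal (fun j => (v j : ℂ)) ∈ skewAdjoint (Matrix n n ℂ) := by
  have : IsSelfAdjoint (diagonal fun j => (v j : ℂ)) :=
    isHermitian_diagonal_of_self_adjoint _ (by ext; simp)
  simpa using this.I_smul_mem_skewAdjoint (K := ℂ)

variable [Fintype n]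

theorem commute_I_smul_diagonal (v w : n → ℂ) : Commute (I • diagonal v) (I • diagonal w) :=
  ((commute_diagonal v w).smul_left I).smul_right I

theorem I_smul_diagonal_sq {v : n → ℂ} {r : ℂ} (hv : ∀ j, v j ^ 2 = r) :
    (I • diagonal v) ^ 2 = (-r) • 1 := by
  rw [smul_pow, diagonal_pow, I_sq, show v ^ 2 = fun _ => r from funext hv]
  ext i j
  simp [diagonal_apply, one_apply]

theorem exists_eq_conjStarAlgAut_I_smul_diagonal {B : Matrix n n ℂ}
    (hB : B ∈ skewAdjoint (Matrix n n ℂ)) :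
    ∃ (U : unitary (Matrix n n ℂ)) (t : n → ℝ),
      B = Unitary.conjStarAlgAut ℂ _ U (I • diagonal fun j => (t j : ℂ)) := by
  have hA : (-(I • B)).IsHermitian := (IsSelfAdjoint.I_smul_of_mem_skewAdjoint (K := ℂ) hB).neg
  refine ⟨hA.eigenvectorUnitary, hA.eigenvalues, ?_⟩
  conv_lhs => rw [show B = I • -(I • B) by simp [smul_smul], hA.spectral_theorem, ← map_smul]
  rfl

end Matrix

def signPattern : Fin 3 → Fin 3 → ℝ := ![![1, 1, -1], ![1, -1, 1], ![-1, 1, 1]]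

theorem signPattern_sq (k j : Fin 3) : signPattern k j ^ 2 = 1 := by
  fin_cases k <;> fin_cases j <;> norm_num [signPattern]

theorem exists_eq_sum_smul_signPattern (t : Fin 3 → ℝ) :
    ∃ c : Fin 3 → ℝ, t = ∑ k, c k • signPattern k :=
  ⟨![(t 0 + t 1) / 2, (t 0 + t 2) / 2, (t 1 + t 2) / 2], by
    ext j; fin_cases j <;> simp [signPattern, Fin.sum_univ_three] <;> ring⟩

theorem exists_isInvariantDecomposition_I_smul_diagonal (t : Fin 3 → ℝ) :
    ∃ d, IsInvariantDecomposition (I • diagonal fun j => (t j : ℂ)) d := by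
  obtain ⟨c, rfl⟩ := exists_eq_sum_smul_signPattern t
  have hsq (k j : Fin 3) : ((c k * signPattern k j : ℝ) : ℂ) ^ 2 = ((c k ^ 2 : ℝ) : ℂ) := by
    rw [← ofReal_pow, mul_pow, signPattern_sq, mul_one]
  refine ⟨fun k => I • diagonal fun j => ((c k * signPattern k j : ℝ) : ℂ), ?_,
    fun k => I_smul_diagonal_ofReal_mem_skewAdjoint _, fun i j => commute_I_smul_diagonal _ _,
    fun k => ⟨-c k ^ 2, neg_nonpos.mpr (sq_nonneg _), ?_⟩⟩
  · simp only [← smul_add, diagonal_add]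
    congr
    ext j
    simp [Fin.sum_univ_three]
  · rw [I_smul_diagonal_sq (hsq k), ofReal_neg]

theorem invariant_decomposition_su3_general
    (B : Matrix (Fin 3) (Fin 3) ℂ) (hskew : Bᴴ = -B) :
    ∃ b : Fin 3 → Matrix (Fin 3) (Fin 3) ℂ,
      B = b 0 + b 1 + b 2 ∧
      (∀ i, (b i)ᴴ = -(b i)) ∧
      (∀ i j, b i * b j = b j * b i) ∧
      (∀ i, ∃ lam : ℝ, lam ≤ 0 ∧ (b i) ^ 2 = (lam : ℂ) • (1 : Matrix (Fin 3) (Fin 3) ℂ)) := by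
  obtain ⟨U, t, rfl⟩ := exists_eq_conjStarAlgAut_I_smul_diagonal hskew
  obtain ⟨d, hd⟩ := exists_isInvariantDecomposition_I_smul_diagonal t
  exact ⟨_, hd.map (Unitary.conjStarAlgAut ℂ _ U)⟩

/-- Every traceless skew-Hermitian 3×3 complex matrix `B` (an element of
the Lie algebra su(3)) can be decomposed as `B = b₁ + b₂ + b₃`, where the `bᵢ` are
skew-Hermitian, pairwise commute, and each satisfies `bᵢ² = λᵢ • 𝟙` for some real
`λᵢ ≤ 0`. -/
theorem invariant_decomposition_su3
    (B : Matrix (Fin 3) (Fin 3) ℂ) (hskew : Bᴴ = -B) (htr : B.trace = 0) :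
    ∃ b : Fin 3 → Matrix (Fin 3) (Fin 3) ℂ,
      B = b 0 + b 1 + b 2 ∧
      (∀ i, (b i)ᴴ = -(b i)) ∧
      (∀ i j, b i * b j = b j * b i) ∧
      (∀ i, ∃ lam : ℝ, lam ≤ 0 ∧ (b i) ^ 2 = (lam : ℂ) • (1 : Matrix (Fin 3) (Fin 3) ℂ)) :=
  invariant_decomposition_su3_general B hskew
end

section
/- For every n ≥ 3, every diagonalizable n×n complex matrix B can be decomposed as B = b₁ + ⋯ + b_n, where the matrices b₁, …, b_n pairwise commute and each satisfies b_i² = c_i·𝟙 for some complex scalar c_i (explicitly, if B = P·diag(α₁,…,α_n)·P⁻¹, one may take b_i = ((α_i − tr B/(n−2))/2)·P·D_i·P⁻¹). -/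
open Matrix

/-- For every `n ≥ 3`, every diagonalizable n×n complex matrix `B` can be
decomposed as `B = b₁ + ⋯ + bₙ`, where the `bᵢ` pairwise commute and each squares to a
complex scalar multiple of the identity. -/
theorem invariant_decomposition_diagonalizable_nxn
    (n : ℕ) (hn : 3 ≤ n)
    (B P : Matrix (Fin n) (Fin n) ℂ) (hP : IsUnit P) (α : Fin n → ℂ)
    (hB : B = P * Matrix.diagonal α * P⁻¹) :
    ∃ b : Fin n → Matrix (Fin n) (Fin n) ℂ,
      B = ∑ i, b i ∧
      (∀ i j, b i * b j = b j * b i) ∧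
      (∀ i, ∃ c : ℂ, (b i) ^ 2 = c • (1 : Matrix (Fin n) (Fin n) ℂ)) := by
  have hdet : IsUnit P.det := (Matrix.isUnit_iff_isUnit_det P).mp hP
  have hPinv : P⁻¹ * P = 1 := Matrix.nonsing_inv_mul P hdet
  have hPinv' : P * P⁻¹ = 1 := Matrix.mul_nonsing_inv P hdet
  have hn2 : ((n : ℂ) - 2) ≠ 0 := by
    have : (n : ℂ) ≠ 2 := by
      exact_mod_cast (by omega : n ≠ 2)
    exact sub_ne_zero.mpr this
  set s : ℂ := ∑ i, α i with hs_def
  set γ : ℂ := s / ((n : ℂ) - 2) with hγ_def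
  set β : Fin n → ℂ := fun i => (α i - γ) / 2 with hβ_def
  set d : Fin n → Fin n → ℂ := fun i j => β i * (if j = i then 1 else -1) with hd_def
  refine ⟨fun i => P * Matrix.diagonal (d i) * P⁻¹, ?_, ?_, ?_⟩
  · -- sum
    have hsum : ∀ j, ∑ i, d i j = α j := by
      intro j
      have h1 : ∀ i, d i j = (if i = j then 2 * β i else 0) - β i := by
        intro i
        by_cases h : i = j
        · simp [hd_def, h]; ring
        · simp [hd_def, h, Ne.symm h]
      have hsb : ∑ i, β i = (s - (n : ℂ) * γ) / 2 := by
        rw [hβ_def, ← Finset.sum_div]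
        rw [Finset.sum_sub_distrib, Finset.sum_const, Finset.card_univ,
          Fintype.card_fin, nsmul_eq_mul, ← hs_def]
      calc ∑ i, d i j = ∑ i, ((if i = j then 2 * β i else 0) - β i) := by
            simp only [h1]
        _ = 2 * β j - ∑ i, β i := by
            rw [Finset.sum_sub_distrib, Finset.sum_ite_eq' Finset.univ j]
            simp
        _ = α j := by
            rw [hsb, hβ_def, hγ_def]
            field_simp
            ring
    have : Matrix.diagonal α = ∑ i, Matrix.diagonal (d i) := by
      ext a b
      by_cases h : a = b
      · subst h
        simp [Matrix.sum_apply, Matrix.diagonal_apply_eq, hsum]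
      · simp [Matrix.sum_apply, Matrix.diagonal_apply_ne _ h]
    rw [hB, this]
    simp [Finset.mul_sum, Finset.sum_mul]
  · -- commute
    intro i j
    have key : ∀ a b : Fin n,
        (P * Matrix.diagonal (d a) * P⁻¹) * (P * Matrix.diagonal (d b) * P⁻¹)
          = P * (Matrix.diagonal (d a) * Matrix.diagonal (d b)) * P⁻¹ := by
      intro a b
      calc (P * Matrix.diagonal (d a) * P⁻¹) * (P * Matrix.diagonal (d b) * P⁻¹)
          = P * Matrix.diagonal (d a) * (P⁻¹ * P) * Matrix.diagonal (d b) * P⁻¹ := by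
            noncomm_ring
        _ = P * (Matrix.diagonal (d a) * Matrix.diagonal (d b)) * P⁻¹ := by
            rw [hPinv]; noncomm_ring
    rw [key, key, Matrix.diagonal_mul_diagonal, Matrix.diagonal_mul_diagonal]
    have : (fun k => d i k * d j k) = (fun k => d j k * d i k) := by
      funext k; ring
    rw [this]
  · -- squares
    intro i
    refine ⟨β i ^ 2, ?_⟩
    have hdd : Matrix.diagonal (d i) * Matrix.diagonal (d i)
        = (β i ^ 2) • (1 : Matrix (Fin n) (Fin n) ℂ) := by
      rw [Matrix.diagonal_mul_diagonal]
      have : (fun k => d i k * d i k) = fun _ => β i ^ 2 := by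
        funext j
        by_cases h : j = i <;> simp [hd_def, h] <;> ring
      rw [this]
      ext a b
      by_cases h : a = b <;> simp [Matrix.diagonal_apply, Matrix.one_apply, h]
    calc (P * Matrix.diagonal (d i) * P⁻¹) ^ 2
        = P * Matrix.diagonal (d i) * (P⁻¹ * P) * Matrix.diagonal (d i) * P⁻¹ := by
          rw [pow_two]; noncomm_ring
      _ = P * (Matrix.diagonal (d i) * Matrix.diagonal (d i)) * P⁻¹ := by
          rw [hPinv]; noncomm_ring
      _ = (β i ^ 2) • (1 : Matrix (Fin n) (Fin n) ℂ) := by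
          rw [hdd]
          rw [Matrix.mul_smul, Matrix.smul_mul, mul_one, hPinv']
end

section
/- Let B be a traceless skew-Hermitian 3×3 complex matrix with B = P·diag(ia₁, ia₂, ia₃)·Pᴴ for a unitary P and real a₁, a₂, a₃ with a₁ + a₂ + a₃ = 0, define b_i = (ia_i/2)·P·D_i·Pᴴ and λ_i = −(a_i/2)², and assume the λ_i are pairwise distinct and nonzero. Then for each i the matrix 𝟙 + (1/(2λ_i))·(B² − (1/4)tr(B²)·𝟙) is invertible and b_i = (B + (det(B)/(8λ_i))·𝟙) · (𝟙 + (1/(2λ_i))·(B² − (1/4)tr(B²)·𝟙))⁻¹. -/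
open Matrix

set_option maxHeartbeats 1600000 in
/-- For a traceless skew-Hermitian 3×3 matrix
`B = P • diag(ia₁, ia₂, ia₃) • Pᴴ` (with `P` unitary, `a₁ + a₂ + a₃ = 0`), with
`bᵢ = (iaᵢ/2) • P • Dᵢ • Pᴴ` and `λᵢ = −(aᵢ/2)²` pairwise distinct and nonzero, the
matrix `𝟙 + (1/(2λᵢ)) • (B² − (1/4)tr(B²) • 𝟙)` is invertible and
`bᵢ = (B + (det B/(8λᵢ)) • 𝟙) * (𝟙 + (1/(2λᵢ)) • (B² − (1/4)tr(B²) • 𝟙))⁻¹`. -/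
theorem invariant_decomposition_closed_form
    (B P : Matrix (Fin 3) (Fin 3) ℂ) (hP : P * Pᴴ = 1)
    (hskew : Bᴴ = -B) (htr : B.trace = 0)
    (a : Fin 3 → ℝ) (hsum : a 0 + a 1 + a 2 = 0)
    (hB : B = P * Matrix.diagonal (fun i => (a i : ℂ) * Complex.I) * Pᴴ)
    (b : Fin 3 → Matrix (Fin 3) (Fin 3) ℂ)
    (hb : ∀ i, b i = ((a i : ℂ) * Complex.I / 2) •
        (P * Matrix.diagonal (fun j => if j = i then (1 : ℂ) else -1) * Pᴴ))
    (lam : Fin 3 → ℂ) (hlam : ∀ i, lam i = ((-(a i / 2) ^ 2 : ℝ) : ℂ))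
    (hdist : ∀ i j, i ≠ j → lam i ≠ lam j) (hne : ∀ i, lam i ≠ 0) :
    ∀ i,
      IsUnit ((1 : Matrix (Fin 3) (Fin 3) ℂ)
          + (1 / (2 * lam i)) • (B ^ 2 - ((1/4) * (B ^ 2).trace) • 1)) ∧
      b i = (B + (B.det / (8 * lam i)) • 1)
          * ((1 : Matrix (Fin 3) (Fin 3) ℂ)
              + (1 / (2 * lam i)) • (B ^ 2 - ((1/4) * (B ^ 2).trace) • 1))⁻¹ := by
  have hQP : Pᴴ * P = 1 := mul_eq_one_comm.mp hP
  have conj_mul : ∀ X Y : Matrix (Fin 3) (Fin 3) ℂ,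
      (P * X * Pᴴ) * (P * Y * Pᴴ) = P * (X * Y) * Pᴴ := by
    intro X Y
    calc (P * X * Pᴴ) * (P * Y * Pᴴ) = P * (X * ((Pᴴ * P) * (Y * Pᴴ))) := by
          simp only [Matrix.mul_assoc]
      _ = P * (X * Y) * Pᴴ := by rw [hQP, one_mul]; simp only [Matrix.mul_assoc]
  -- B² as a conjugated diagonal matrix
  have hB2 : B ^ 2 = P * Matrix.diagonal (fun j => -((a j : ℂ)) ^ 2) * Pᴴ := by
    rw [pow_two, hB, conj_mul, Matrix.diagonal_mul_diagonal]
    have h : (fun j => ((a j : ℂ) * Complex.I) * ((a j : ℂ) * Complex.I))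
        = fun j => -((a j : ℂ)) ^ 2 := by
      funext j
      have h2 : ((a j : ℂ) * Complex.I) * ((a j : ℂ) * Complex.I)
          = (a j : ℂ) ^ 2 * Complex.I ^ 2 := by ring
      rw [h2, Complex.I_sq]
      ring
    rw [h]
  -- trace of B²
  have htB2 : (B ^ 2).trace = -((a 0 : ℂ) ^ 2 + (a 1 : ℂ) ^ 2 + (a 2 : ℂ) ^ 2) := by
    rw [hB2, Matrix.trace_mul_cycle, hQP, one_mul, Matrix.trace_diagonal,
      Fin.sum_univ_three]
    ring
  -- determinant of conjugation
  have hPdet : P.det * Pᴴ.det = 1 := by rw [← Matrix.det_mul, hP, Matrix.det_one]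
  have conj_det : ∀ X : Matrix (Fin 3) (Fin 3) ℂ, (P * X * Pᴴ).det = X.det := by
    intro X
    rw [Matrix.det_mul, Matrix.det_mul]
    linear_combination X.det * hPdet
  -- determinant of B
  have hdetB : B.det = -Complex.I * ((a 0 : ℂ) * (a 1 : ℂ) * (a 2 : ℂ)) := by
    rw [hB, conj_det, Matrix.det_diagonal, Fin.prod_univ_three]
    have h : ((a 0 : ℂ) * Complex.I) * ((a 1 : ℂ) * Complex.I) * ((a 2 : ℂ) * Complex.I)
        = (a 0 : ℂ) * (a 1 : ℂ) * (a 2 : ℂ) * (Complex.I ^ 2 * Complex.I) := by ring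
    rw [h, Complex.I_sq]
    ring
  have hsumC : (a 0 : ℂ) + (a 1 : ℂ) + (a 2 : ℂ) = 0 := by exact_mod_cast hsum
  have hz2 : (a 2 : ℂ) = -(a 0 : ℂ) - (a 1 : ℂ) := by linear_combination hsumC
  have lamval : ∀ i, lam i = -((a i : ℂ) / 2) ^ 2 := by
    intro i; rw [hlam]; push_cast; ring
  have ha : ∀ j, (a j : ℂ) ≠ 0 := by
    intro j h
    apply hne j
    rw [lamval j, h]
    ring
  have hab : ∀ j k, j ≠ k → (a j : ℂ) - (a k : ℂ) ≠ 0 := by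
    intro j k hjk h
    apply hdist j k hjk
    rw [lamval j, lamval k]
    have h' : (a j : ℂ) = (a k : ℂ) := by linear_combination h
    rw [h']
  -- scalar nonzero facts
  have hx : (a 0 : ℂ) ≠ 0 := ha 0
  have hy : (a 1 : ℂ) ≠ 0 := ha 1
  have hxy : (a 0 : ℂ) - (a 1 : ℂ) ≠ 0 := hab 0 1 (by decide)
  have hyx : (a 1 : ℂ) - (a 0 : ℂ) ≠ 0 := hab 1 0 (by decide)
  have hS : (a 0 : ℂ) + (a 1 : ℂ) ≠ 0 := by
    intro h; exact ha 2 (by rw [hz2]; linear_combination -h)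
  have h2xy : 2 * (a 0 : ℂ) + (a 1 : ℂ) ≠ 0 := by
    intro h; exact hab 0 2 (by decide) (by rw [hz2]; linear_combination h)
  have hx2y : (a 0 : ℂ) + 2 * (a 1 : ℂ) ≠ 0 := by
    intro h; exact hab 1 2 (by decide) (by rw [hz2]; linear_combination h)
  have hS' : -(a 0 : ℂ) - (a 1 : ℂ) ≠ 0 := by
    intro h; exact hS (by linear_combination -h)
  have key : ∀ u v w : ℂ, v ≠ 0 → w ≠ 0 → u * w = v → u ≠ 0 := by
    intro u v w hv hw h hu
    exact hv (by rw [← h, hu, zero_mul])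
  have hj : ∀ j : Fin 3, j = 0 ∨ j = 1 ∨ j = 2 := fun j => by omega
  intro i
  set g : Fin 3 → ℂ :=
    fun j => 1 + 1 / (2 * lam i) * (-((a j : ℂ)) ^ 2 - 1 / 4 * (B ^ 2).trace) with hg
  have hM : (1 : Matrix (Fin 3) (Fin 3) ℂ)
      + (1 / (2 * lam i)) • (B ^ 2 - ((1/4) * (B ^ 2).trace) • 1)
      = P * Matrix.diagonal g * Pᴴ := by
    have hgd : Matrix.diagonal g = 1
        + (1 / (2 * lam i)) • (Matrix.diagonal (fun j => -((a j : ℂ)) ^ 2)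
            - ((1/4) * (B ^ 2).trace) • 1) := by
      ext j k
      rcases eq_or_ne j k with rfl | hjk
      · simp [hg]
      · simp [Matrix.diagonal_apply_ne _ hjk, Matrix.one_apply_ne hjk]
    rw [hgd]
    simp only [Matrix.mul_add, Matrix.add_mul, Matrix.mul_sub, Matrix.sub_mul,
      mul_smul_comm, smul_mul_assoc, Matrix.mul_one, Matrix.one_mul, hP, ← hB2]
  have hgne : ∀ j, g j ≠ 0 := by
    intro j
    rw [hg]
    simp only [lamval i, htB2]
    rcases hj i with rfl | rfl | rfl <;> rcases hj j with rfl | rfl | rfl <;> rw [hz2]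
    · exact key _ (((a 0:ℂ) - (a 1)) * (2*(a 0:ℂ) + (a 1))) ((a 0:ℂ)^2)
        (mul_ne_zero hxy h2xy) (pow_ne_zero 2 hx) (by field_simp; try ring_nf; try field_simp; try ring)
    · exact key _ ((a 1:ℂ) * ((a 1:ℂ) - (a 0))) ((a 0:ℂ)^2)
        (mul_ne_zero hy hyx) (pow_ne_zero 2 hx) (by field_simp; try ring_nf; try field_simp; try ring)
    · exact key _ (((a 0:ℂ) + (a 1)) * (2*(a 0:ℂ) + (a 1))) ((a 0:ℂ)^2)
        (mul_ne_zero hS h2xy) (pow_ne_zero 2 hx) (by field_simp; try ring_nf; try field_simp; try ring)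
    · exact key _ ((a 0:ℂ) * ((a 0:ℂ) - (a 1))) ((a 1:ℂ)^2)
        (mul_ne_zero hx hxy) (pow_ne_zero 2 hy) (by field_simp; try ring_nf; try field_simp; try ring)
    · exact key _ (((a 1:ℂ) - (a 0)) * ((a 0:ℂ) + 2*(a 1))) ((a 1:ℂ)^2)
        (mul_ne_zero hyx hx2y) (pow_ne_zero 2 hy) (by field_simp; try ring_nf; try field_simp; try ring)
    · exact key _ (((a 0:ℂ) + (a 1)) * ((a 0:ℂ) + 2*(a 1))) ((a 1:ℂ)^2)
        (mul_ne_zero hS hx2y) (pow_ne_zero 2 hy) (by field_simp; try ring_nf; try field_simp; try ring)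
    · exact key _ ((a 0:ℂ) * (2*(a 0:ℂ) + (a 1))) (((a 0:ℂ) + (a 1))^2)
        (mul_ne_zero hx h2xy) (pow_ne_zero 2 hS) (by field_simp [hS']; try ring_nf; try field_simp; try ring)
    · exact key _ ((a 1:ℂ) * ((a 0:ℂ) + 2*(a 1))) (((a 0:ℂ) + (a 1))^2)
        (mul_ne_zero hy hx2y) (pow_ne_zero 2 hS) (by field_simp [hS']; try ring_nf; try field_simp; try ring)
    · exact key _ ((2*(a 0:ℂ) + (a 1)) * ((a 0:ℂ) + 2*(a 1))) (((a 0:ℂ) + (a 1))^2)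
        (mul_ne_zero h2xy hx2y) (pow_ne_zero 2 hS) (by field_simp [hS']; try ring_nf; try field_simp; try ring)
  have hU : IsUnit (P * Matrix.diagonal g * Pᴴ).det := by
    rw [conj_det, Matrix.det_diagonal, Fin.prod_univ_three]
    exact (mul_ne_zero (mul_ne_zero (hgne 0) (hgne 1)) (hgne 2)).isUnit
  have keyeq : b i * (P * Matrix.diagonal g * Pᴴ)
      = B + (B.det / (8 * lam i)) • 1 := by
    obtain ⟨s, hs⟩ : ∃ s, B.det / (8 * lam i) = s := ⟨_, rfl⟩
    rw [hs, hb i, hB, smul_mul_assoc, conj_mul, Matrix.diagonal_mul_diagonal]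
    have hRHS : P * Matrix.diagonal (fun j => (a j : ℂ) * Complex.I) * Pᴴ
        + s • 1
        = P * Matrix.diagonal (fun j => (a j : ℂ) * Complex.I
            + s) * Pᴴ := by
      have hd : Matrix.diagonal (fun j => (a j : ℂ) * Complex.I + s)
          = Matrix.diagonal (fun j => (a j : ℂ) * Complex.I)
            + s • 1 := by
        ext j k
        rcases eq_or_ne j k with rfl | hjk
        · simp
        · simp [Matrix.diagonal_apply_ne _ hjk, Matrix.one_apply_ne hjk]
      rw [hd]
      simp only [Matrix.mul_add, Matrix.add_mul, mul_smul_comm, smul_mul_assoc,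
        Matrix.mul_one, hP]
    rw [hRHS, ← smul_mul_assoc, ← mul_smul_comm, ← Matrix.diagonal_smul]
    congr 2
    refine congrArg Matrix.diagonal (funext fun j => ?_)
    rw [← hs]
    simp only [Pi.smul_apply, smul_eq_mul, hg, lamval i, htB2, hdetB]
    rcases hj i with rfl | rfl | rfl <;> rcases hj j with rfl | rfl | rfl
    all_goals simp only [Fin.reduceEq, reduceIte, if_true, if_false]
    all_goals rw [hz2]
    all_goals field_simp [hS']
    all_goals try ring_nf
    all_goals try field_simp
    all_goals try ring
  refine ⟨?_, ?_⟩
  · rw [hM]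
    exact (Matrix.isUnit_iff_isUnit_det _).mpr hU
  · rw [hM, ← keyeq]
    exact (Matrix.mul_nonsing_inv_cancel_right _ _ hU).symm
end

section
/- Principal logarithm of a simple factor: let b be a skew-Hermitian 3×3 complex matrix with b² = −β²·𝟙 for some real β with 0 < β < π, and let U = exp(b). Then Re((1/3)·tr(U)) = cos β, hence arccos(Re((1/3)·tr(U))) = β, and (U − Uᴴ)/2 = (sin(β)/β)·b, so that b = (β / sin β)·(U − Uᴴ)/2. -/
/-!
Since `b² = -β²`, the even powers of `b` are scalars `(-β²)ᵏ` and the odd ones are `(-β²)ᵏ b`,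
so the exponential series splits into the cosine and sine series: `exp b = cos β + (sin β / β) b`.
As `b` is skew-Hermitian, `Uᴴ = exp (-b) = cos β - (sin β / β) b` and `tr b` is purely imaginary;
both claims follow, and `arccos` inverts `cos` on `[0, π]`.
-/

open NormedSpace Nat

section

variable {A : Type*} [Ring A] [Algebra ℂ A] [TopologicalSpace A] [IsTopologicalRing A]
  [ContinuousSMul ℂ A] [T2Space A]

theorem exp_eq_cos_smul_one_add_sin_div_smul {b : A} {z : ℂ} (hz : z ≠ 0)
    (hb : b ^ 2 = -z ^ 2 • (1 : A)) :
    exp b = Complex.cos z • (1 : A) + (Complex.sin z / z) • b := by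
  have hpow_even (k : ℕ) : b ^ (2 * k) = (-z ^ 2) ^ k • (1 : A) := by
    rw [pow_mul, hb, smul_pow, one_pow]
  have hpow_odd (k : ℕ) : b ^ (2 * k + 1) = (-z ^ 2) ^ k • b := by
    rw [pow_succ, hpow_even, smul_one_mul]
  have hcos : HasSum (fun k => ((2 * k)! : ℂ)⁻¹ • b ^ (2 * k)) (Complex.cos z • (1 : A)) := by
    refine ((Complex.hasSum_cos z).smul_const (1 : A)).congr_fun fun k => ?_
    rw [hpow_even, smul_smul, neg_pow, ← pow_mul]
    ring_nf
  have hsin : HasSum (fun k => ((2 * k + 1)! : ℂ)⁻¹ • b ^ (2 * k + 1))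
      ((Complex.sin z / z) • b) := by
    refine (((Complex.hasSum_sin z).div_const z).smul_const b).congr_fun fun k => ?_
    rw [hpow_odd, smul_smul, neg_pow, ← pow_mul]
    congr 1
    field_simp
    ring
  rw [exp_eq_tsum ℂ]
  exact (HasSum.even_add_odd (f := fun n => (n ! : ℂ)⁻¹ • b ^ n) hcos hsin).tsum_eq

end

open Matrix

theorem Matrix.re_trace_eq_zero_of_conjTranspose_eq_neg {n : Type*} [Fintype n]
    {A : Matrix n n ℂ} (hA : Aᴴ = -A) : A.trace.re = 0 := by
  have h := congrArg Complex.re (trace_conjTranspose A)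
  rw [hA, trace_neg, Complex.neg_re, Complex.star_def, Complex.conj_re] at h
  linarith

/-- Principal logarithm of a simple factor: if `b` is skew-Hermitian with
`b² = −β² • 𝟙`, `0 < β < π`, and `U = exp b`, then `Re((1/3)tr U) = cos β`, hence
`arccos (Re((1/3)tr U)) = β`, and `(U − Uᴴ)/2 = (sin β / β) • b`, so that
`b = (β / sin β) • (U − Uᴴ)/2`. -/
theorem principal_logarithm_simple_factor
    (b : Matrix (Fin 3) (Fin 3) ℂ) (hskew : bᴴ = -b) (β : ℝ)
    (hβ0 : 0 < β) (hβπ : β < Real.pi)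
    (hb : b ^ 2 = -(((β : ℂ)) ^ 2) • (1 : Matrix (Fin 3) (Fin 3) ℂ))
    (U : Matrix (Fin 3) (Fin 3) ℂ) (hU : U = NormedSpace.exp b) :
    ((1/3 : ℂ) * U.trace).re = Real.cos β ∧
    Real.arccos (((1/3 : ℂ) * U.trace).re) = β ∧
    (1/2 : ℂ) • (U - Uᴴ) = (((Real.sin β / β : ℝ) : ℂ)) • b ∧
    b = (((β / Real.sin β : ℝ) : ℂ)) • ((1/2 : ℂ) • (U - Uᴴ)) := by
  have hβ : (β : ℂ) ≠ 0 := Complex.ofReal_ne_zero.mpr hβ0.ne'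
  have hsin : Real.sin β ≠ 0 := (Real.sin_pos_of_pos_of_lt_pi hβ0 hβπ).ne'
  have hcoeff : Complex.sin β / β = ((Real.sin β / β : ℝ) : ℂ) := by push_cast; rfl
  have hexp : U = (Real.cos β : ℂ) • 1 + ((Real.sin β / β : ℝ) : ℂ) • b := by
    rw [hU, exp_eq_cos_smul_one_add_sin_div_smul hβ hb, hcoeff, Complex.ofReal_cos]
  have hexp_adj : Uᴴ = (Real.cos β : ℂ) • 1 - ((Real.sin β / β : ℝ) : ℂ) • b := by
    rw [hU, ← exp_conjTranspose, hskew,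
      exp_eq_cos_smul_one_add_sin_div_smul hβ (by rwa [neg_sq]), hcoeff, Complex.ofReal_cos,
      smul_neg, sub_eq_add_neg]
  have htrace : ((1/3 : ℂ) * U.trace).re = Real.cos β := by
    have h : (1/3 : ℂ) * U.trace = (Real.cos β : ℂ) + ((Real.sin β / β / 3 : ℝ) : ℂ) * b.trace := by
      rw [hexp, trace_add, trace_smul, trace_smul, trace_one, Fintype.card_fin]
      push_cast
      ring
    rw [h, Complex.add_re, Complex.ofReal_re, Complex.re_ofReal_mul,
      re_trace_eq_zero_of_conjTranspose_eq_neg hskew, mul_zero, add_zero]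
  have hskew_part : (1/2 : ℂ) • (U - Uᴴ) = ((Real.sin β / β : ℝ) : ℂ) • b := by
    rw [hexp_adj, hexp]
    module
  refine ⟨htrace, by rw [htrace, Real.arccos_cos hβ0.le hβπ.le], hskew_part, ?_⟩
  rw [hskew_part, smul_smul, ← Complex.ofReal_mul, div_mul_div_cancel₀ hsin, div_self hβ0.ne',
    Complex.ofReal_one, one_smul]
end

section
/- Grade-0 identity: let P be a unitary 3×3 complex matrix, let a₁, a₂, a₃ be real numbers with a₁ + a₂ + a₃ = 0, set b_i = (ia_i/2)·P·D_i·Pᴴ and B = b₁ + b₂ + b₃. Then ccos(b₁)·ccos(b₂)·ccos(b₃) = (1/4)·𝟙 + (1/4)·tr(ccos(B))·𝟙. -/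
/-!
Each `b i` is the unitary conjugate of `i • diagonal (±a i / 2)`, and cosine is even, so
`ccos (b i) = cos (a i / 2) • 1`. Summing, `B` is the unitary conjugate of `i • diagonal a`
(this is where `a 0 + a 1 + a 2 = 0` enters), so `tr (ccos B) = ∑ cos (a j)`. The identity is
then the product-to-sum formula for `cos (x/2) cos (y/2) cos (z/2)` when `x + y + z = 0`.
-/

open Matrix

/-- `ccos M = (exp M + (exp M)ᴴ)/2`. -/
noncomputable def ccos (M : Matrix (Fin 3) (Fin 3) ℂ) : Matrix (Fin 3) (Fin 3) ℂ :=
  (1/2 : ℂ) • (NormedSpace.exp M + (NormedSpace.exp M)ᴴ)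

section UnitaryConj

variable {n : Type*} [Fintype n] [DecidableEq n]

theorem Matrix.exp_unitary_conj_diagonal {P : Matrix n n ℂ} (hP : P * Pᴴ = 1) (v : n → ℂ) :
    NormedSpace.exp (P * diagonal v * Pᴴ) = P * diagonal (fun j => Complex.exp (v j)) * Pᴴ := by
  let U : (Matrix n n ℂ)ˣ := ⟨P, Pᴴ, hP, mul_eq_one_comm.mp hP⟩
  rw [show P = U from rfl, show Pᴴ = ↑U⁻¹ from rfl, exp_units_conj, exp_diagonal, Pi.exp_def]
  simp only [Complex.exp_eq_exp_ℂ]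

theorem Matrix.conjTranspose_conj_diagonal {R : Type*} [CommSemiring R] [StarRing R]
    (P : Matrix n n R) (v : n → R) :
    (P * diagonal v * Pᴴ)ᴴ = P * diagonal (star v) * Pᴴ := by
  rw [conjTranspose_mul, conjTranspose_mul, conjTranspose_conjTranspose, diagonal_conjTranspose,
    Matrix.mul_assoc]

theorem Matrix.trace_unitary_conj {R : Type*} [CommSemiring R] [StarRing R]
    {P : Matrix n n R} (hP : P * Pᴴ = 1) (M : Matrix n n R) :
    (P * M * Pᴴ).trace = M.trace := by
  rw [trace_mul_cycle, mul_eq_one_comm.mp hP, Matrix.one_mul]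

theorem Matrix.unitary_conj_diagonal_const {R : Type*} [CommSemiring R] [StarRing R]
    {P : Matrix n n R} (hP : P * Pᴴ = 1) (c : R) :
    P * diagonal (fun _ => c) * Pᴴ = c • 1 := by
  rw [← smul_one_eq_diagonal, Matrix.mul_smul, Matrix.mul_one, Matrix.smul_mul, hP]

end UnitaryConj

theorem ccos_unitary_conj_diagonal_ofReal_mul_I {P : Matrix (Fin 3) (Fin 3) ℂ} (hP : P * Pᴴ = 1)
    (t : Fin 3 → ℝ) :
    ccos (P * diagonal (fun j => (t j : ℂ) * Complex.I) * Pᴴ)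
      = P * diagonal (fun j => (Real.cos (t j) : ℂ)) * Pᴴ := by
  rw [ccos, exp_unitary_conj_diagonal hP, conjTranspose_conj_diagonal, ← Matrix.add_mul,
    ← Matrix.mul_add, diagonal_add, ← Matrix.smul_mul, ← Matrix.mul_smul, ← diagonal_smul]
  congr 3
  funext j
  simp only [Pi.smul_apply, Pi.star_apply, smul_eq_mul, Complex.star_def]
  rw [← Complex.exp_ofReal_mul_I_re, Complex.re_eq_add_conj]
  ring

theorem Real.cos_half_mul_cos_half_mul_cos_half {x y z : ℝ} (h : x + y + z = 0) :
    cos (x / 2) * cos (y / 2) * cos (z / 2) = (1 + cos x + cos y + cos z) / 4 := by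
  obtain rfl : z = -(x + y) := by linarith
  obtain ⟨u, rfl⟩ : ∃ u, x = 2 * u := ⟨x / 2, by ring⟩
  obtain ⟨v, rfl⟩ : ∃ v, y = 2 * v := ⟨y / 2, by ring⟩
  rw [show -(2 * u + 2 * v) / 2 = -(u + v) by ring, show 2 * u / 2 = u by ring,
    show 2 * v / 2 = v by ring, cos_neg, cos_neg, cos_add, cos_add, cos_two_mul, cos_two_mul,
    sin_two_mul, sin_two_mul]
  ring

/-- Grade-0 identity: with `P` unitary, `a₁ + a₂ + a₃ = 0`,
`bᵢ = (iaᵢ/2) • P • Dᵢ • Pᴴ` and `B = b₁ + b₂ + b₃`, we have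
`ccos b₁ * ccos b₂ * ccos b₃ = (1/4) • 𝟙 + (1/4)tr(ccos B) • 𝟙`. -/
theorem grade_zero_identity
    (P : Matrix (Fin 3) (Fin 3) ℂ) (hP : P * Pᴴ = 1)
    (a : Fin 3 → ℝ) (hsum : a 0 + a 1 + a 2 = 0)
    (b : Fin 3 → Matrix (Fin 3) (Fin 3) ℂ)
    (hb : ∀ i, b i = ((a i : ℂ) * Complex.I / 2) •
        (P * Matrix.diagonal (fun j => if j = i then (1 : ℂ) else -1) * Pᴴ))
    (B : Matrix (Fin 3) (Fin 3) ℂ) (hB : B = b 0 + b 1 + b 2) :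
    ccos (b 0) * ccos (b 1) * ccos (b 2)
      = (1/4 : ℂ) • (1 : Matrix (Fin 3) (Fin 3) ℂ)
        + ((1/4 : ℂ) * (ccos B).trace) • (1 : Matrix (Fin 3) (Fin 3) ℂ) := by
  have hb_diag : ∀ i, b i = P * diagonal
      (fun j => ((a i / 2 * if j = i then 1 else -1 : ℝ) : ℂ) * Complex.I) * Pᴴ := by
    intro i
    rw [hb i, ← Matrix.smul_mul, ← Matrix.mul_smul, ← diagonal_smul]
    congr 3
    funext j
    simp only [Pi.smul_apply, smul_eq_mul]
    split_ifs <;> push_cast <;> ring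
  have hccos_b : ∀ i, ccos (b i) = (Real.cos (a i / 2) : ℂ) • 1 := by
    intro i
    rw [hb_diag, ccos_unitary_conj_diagonal_ofReal_mul_I hP, ← unitary_conj_diagonal_const hP]
    congr 3
    funext j
    split_ifs <;> simp
  have hB_diag : B = P * diagonal (fun j => (a j : ℂ) * Complex.I) * Pᴴ := by
    rw [hB, hb_diag 0, hb_diag 1, hb_diag 2, ← Matrix.add_mul, ← Matrix.add_mul, ← Matrix.mul_add,
      ← Matrix.mul_add, diagonal_add, diagonal_add]
    congr 3
    funext j
    have hsum_C : (a 0 : ℂ) + a 1 + a 2 = 0 := by exact_mod_cast hsum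
    fin_cases j <;>
      simp only [Fin.isValue, Fin.zero_eta, Fin.mk_one, Fin.reduceFinMk, Fin.reduceEq, ↓reduceIte,
        mul_one, mul_neg, neg_mul, Complex.ofReal_neg, Complex.ofReal_div, Complex.ofReal_ofNat] <;>
      linear_combination (-Complex.I / 2) * hsum_C
  rw [hccos_b, hccos_b, hccos_b, hB_diag, ccos_unitary_conj_diagonal_ofReal_mul_I hP,
    trace_unitary_conj hP, trace_diagonal, Fin.sum_univ_three]
  simp only [smul_mul_smul_comm, Matrix.one_mul, ← add_smul]
  congr 1
  rw [← Complex.ofReal_mul, ← Complex.ofReal_mul, Real.cos_half_mul_cos_half_mul_cos_half hsum]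
  push_cast
  ring
end
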